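/- arXiv:1410.3339 — 6 statements merged into one kernel-verified Lean document; each statement's English description precedes it below -/
import Mathlib

section
/- Let X be a compact Hausdorff space and A a subset of C(X) that is norm-bounded and compact in the topology of pointwise convergence (i.e., A is a pointwise-compact subset of C(X)). Then A is compact in the weak topology of the Banach space C(X). -/
/-!
Every functional `φ` on `C(X)` is dominated by the positive functional
`|φ| f = sup {φ h : |h| ≤ f}`, which by the Riesz–Markov–Kakutani theorem is integration against a
finite measure `μ`. Hence `|φ h| ≤ ∫ |h| dμ`, and dominated convergence makes `φ` continuous along
bounded pointwise convergent sequences.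

Sequences suffice because a pointwise compact `A ⊆ C(X)` is Fréchet–Urysohn (Grothendieck): let
`f` be in the pointwise closure of `S ⊆ A` and `F 0 = f`. Inductively, let `E k ⊇ E (k - 1)` be a
finite set containing a `1/(k+1)`-net of `X` for `F 0, …, F k`, and pick `F (k+1) ∈ S` within
`1/(k+1)` of `f` on `E k`. Then `F` converges to `f` on `D = ⋃ E k`, and `x ↦ (F k x)ₖ` maps `D`
densely into its range. Both `f` and every pointwise cluster point `G ∈ A` of `F` factor through
that map and agree on `D`, so `G = f` and `F → f`.

Hence each `φ` is pointwise continuous on `A`, so the weak and pointwise topologies agree on `A`.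
-/

open Filter Topology

/-- The identity map from `C(X, ℝ)` to itself equipped with the weak topology. -/
noncomputable def toWeak {X : Type*} [TopologicalSpace X] [CompactSpace X] :
    C(X, ℝ) → WeakSpace ℝ C(X, ℝ) := fun f => f

open MeasureTheory Set
open scoped NNReal Pointwise
open CompactlySupported CompactlySupportedContinuousMap NNRealRMK

theorem exists_forall_abs_sub_lt_of_mem_closure {X : Type*} {S : Set (X → ℝ)} {f : X → ℝ}
    (hf : f ∈ closure S) (E : Finset X) {δ : ℝ} (hδ : 0 < δ) :
    ∃ g ∈ S, ∀ x ∈ E, |g x - f x| < δ := by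
  have hnhds : {g : X → ℝ | ∀ x ∈ E, |g x - f x| < δ} ∈ 𝓝 f :=
    E.eventually_all.2 fun x _ => by
      simpa [Real.dist_eq] using (continuous_apply x).continuousAt.eventually
        (Metric.ball_mem_nhds (f x) hδ)
  obtain ⟨g, hg, hgS⟩ := mem_closure_iff_nhds.1 hf _ hnhds
  exact ⟨g, hgS, hg⟩

theorem tendsto_of_eventually_abs_sub_lt_one_div {u : ℕ → ℝ} {a : ℝ}
    (h : ∀ᶠ n in atTop, |u n - a| < 1 / (n + 1)) : Tendsto u atTop (𝓝 a) :=
  tendsto_iff_norm_sub_tendsto_zero.2 <| squeeze_zero' (.of_forall fun _ => norm_nonneg _)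
    (h.mono fun _ hn => hn.le) tendsto_one_div_add_atTop_nhds_zero_nat

section PointwiseCompact

variable {X : Type*} [TopologicalSpace X] [CompactSpace X]

theorem exists_finset_forall_exists_abs_sub_lt (g : ℕ → C(X, ℝ)) (m : ℕ) {ε : ℝ} (hε : 0 < ε) :
    ∃ E : Finset X, ∀ x, ∃ e ∈ E, ∀ i ≤ m, |g i e - g i x| < ε := by
  obtain ⟨E, hE⟩ := CompactSpace.elim_nhds_subcover
    (fun y => {x | ∀ i ≤ m, |g i y - g i x| < ε}) fun y =>
      (finite_Iic m).eventually_all.2 fun i _ => by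
        simpa [Real.dist_eq, abs_sub_comm] using (g i).continuous.continuousAt.eventually
          (Metric.ball_mem_nhds (g i y) hε)
  refine ⟨E, fun x => ?_⟩
  simpa using hE.ge (mem_univ x)

theorem eq_of_factorsThrough_of_mem_closure {Y : Type*} [TopologicalSpace Y] [T2Space Y]
    {Ψ : X → Y} (hΨ : Continuous Ψ) {g h : X → ℝ} (hg : Continuous g) (hh : Continuous h)
    (hgΨ : g.FactorsThrough Ψ) (hhΨ : h.FactorsThrough Ψ) {D : Set X}
    (hD : ∀ x, Ψ x ∈ closure (Ψ '' D)) (hgh : EqOn g h D) : g = h := by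
  funext x
  -- the range of `(Ψ, g - h)` is compact, hence closed, and it contains `(Ψ '' D) ×ˢ {0}`
  have hclosed : IsClosed (range fun y => (Ψ y, g y - h y)) :=
    (isCompact_range (hΨ.prodMk (hg.sub hh))).isClosed
  have hsub : (Ψ '' D) ×ˢ {(0 : ℝ)} ⊆ range fun y => (Ψ y, g y - h y) := by
    rintro ⟨_, _⟩ ⟨⟨d, hd, rfl⟩, rfl⟩
    exact ⟨d, by simp [hgh hd]⟩
  obtain ⟨y, hy⟩ : (Ψ x, (0 : ℝ)) ∈ range fun y => (Ψ y, g y - h y) :=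
    hclosed.closure_subset_iff.2 hsub (by simpa [closure_prod_eq] using hD x)
  simp only [Prod.mk.injEq, sub_eq_zero] at hy
  rw [← hgΨ hy.1, ← hhΨ hy.1, hy.2]

theorem exists_seq_approx_of_mem_closure {S : Set C(X, ℝ)} {f : C(X, ℝ)}
    (hf : ⇑f ∈ closure ((⇑) '' S)) :
    ∃ (F : ℕ → C(X, ℝ)) (E : ℕ → Finset X), F 0 = f ∧ (∀ n, F (n + 1) ∈ S) ∧ Monotone E ∧
      (∀ n, ∀ d ∈ E n, |F (n + 1) d - f d| < 1 / (n + 1)) ∧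
      ∀ n x, ∃ e ∈ E n, ∀ i ≤ n, |F i e - F i x| < 1 / (n + 1) := by
  classical
  choose net hnet using fun (g : ℕ → C(X, ℝ)) (n : ℕ) =>
    exists_finset_forall_exists_abs_sub_lt g n (Nat.one_div_pos_of_nat (n := n))
  have happrox : ∀ (E : Finset X) (n : ℕ), ∃ g ∈ S, ∀ x ∈ E, |g x - f x| < 1 / (n + 1) := by
    intro E n
    obtain ⟨_, ⟨g, hg, rfl⟩, hgE⟩ :=
      exists_forall_abs_sub_lt_of_mem_closure hf E (Nat.one_div_pos_of_nat (n := n))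
    exact ⟨g, hg, hgE⟩
  choose pick hpickS hpick using happrox
  -- the state after step `n` holds `F 0, …, F n` and `E (n - 1)` (empty for `n = 0`)
  let s : ℕ → (ℕ → C(X, ℝ)) × Finset X := fun n => Nat.rec (fun _ => f, ∅)
    (fun n p => (Function.update p.1 (n + 1) (pick (p.2 ∪ net p.1 n) n), p.2 ∪ net p.1 n)) n
  let F : ℕ → C(X, ℝ) := fun n => (s n).1 n
  let E : ℕ → Finset X := fun n => (s (n + 1)).2
  have hstab : ∀ i n, i ≤ n → (s n).1 i = F i := fun i n hin => by
    induction n, hin using Nat.le_induction with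
    | base => rfl
    | succ n hin ih => exact (Function.update_of_ne (by omega) _ _).trans ih
  have hF : ∀ n, F (n + 1) = pick (E n) n := fun n => Function.update_self _ _ _
  refine ⟨F, E, rfl, fun n => hF n ▸ hpickS _ n,
    monotone_nat_of_le_succ fun n => Finset.subset_union_left,
    fun n d hd => hF n ▸ hpick _ n d hd, fun n x => ?_⟩
  obtain ⟨e, he, hex⟩ := hnet (s n).1 n x
  refine ⟨e, Finset.subset_union_right he, fun i hi => ?_⟩
  simpa only [hstab i n hi] using hex i hi

theorem tendsto_pointwise_of_tendsto_on_of_mem_closure {A : Set C(X, ℝ)}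
    (hA : IsCompact ((⇑) '' A)) {F : ℕ → C(X, ℝ)} (hFA : ∀ k, F k ∈ A) {D : Set X}
    (hFD : ∀ d ∈ D, Tendsto (fun k => F k d) atTop (𝓝 (F 0 d)))
    (hD : ∀ x, (fun k => F k x) ∈ closure ((fun d k => F k d) '' D)) :
    Tendsto (fun k => ⇑(F k)) atTop (𝓝 ⇑(F 0)) := by
  refine hA.tendsto_nhds_of_unique_mapClusterPt
    (.of_forall fun k => mem_image_of_mem _ (hFA k)) ?_
  rintro _ ⟨G, -, rfl⟩ hG
  have hGlim : ∀ {u : (X → ℝ) → ℝ}, Continuous u → ∀ {c : ℝ},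
      Tendsto (fun k => u (F k)) atTop (𝓝 c) → u G = c := fun hu _ hc =>
    eq_of_nhds_neBot ((hG.continuousAt_comp hu.continuousAt).clusterPt.mono hc)
  refine eq_of_factorsThrough_of_mem_closure (continuous_pi fun k => (F k).continuous)
    G.continuous (F 0).continuous (fun x y hxy => ?_) (fun x y hxy => congrFun hxy 0) hD
    fun d hd => hGlim (continuous_apply d) (hFD d hd)
  refine sub_eq_zero.1 (hGlim (u := fun u => u x - u y) (by fun_prop) ?_)
  simp [show ∀ k, F k x = F k y from congrFun hxy]

theorem exists_seq_tendsto_pointwise_of_mem_closure {A S : Set C(X, ℝ)}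
    (hA : IsCompact ((⇑) '' A)) (hSA : S ⊆ A) {f : C(X, ℝ)} (hf : ⇑f ∈ closure ((⇑) '' S)) :
    ∃ F : ℕ → C(X, ℝ), (∀ k, F k ∈ S) ∧ Tendsto (fun k => ⇑(F k)) atTop (𝓝 ⇑f) := by
  have hfA : f ∈ A := by
    obtain ⟨g, hgA, hgf⟩ := hA.isClosed.closure_subset_iff.2 (image_mono hSA) hf
    rwa [← DFunLike.coe_injective hgf]
  obtain ⟨F, E, rfl, hFS, hEmono, hFE, hEnet⟩ := exists_seq_approx_of_mem_closure hf
  refine ⟨fun k => F (k + 1), hFS, (tendsto_add_atTop_iff_nat (f := fun k => ⇑(F k)) 1).2 ?_⟩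
  refine tendsto_pointwise_of_tendsto_on_of_mem_closure hA (D := ⋃ n, (E n : Set X))
    (fun k => k.casesOn hfA fun k => hSA (hFS k)) (fun d hd => ?_) fun x => ?_
  · obtain ⟨n, hdn⟩ := mem_iUnion.1 hd
    refine (tendsto_add_atTop_iff_nat 1).1 (tendsto_of_eventually_abs_sub_lt_one_div ?_)
    filter_upwards [eventually_ge_atTop n] with k hk
    exact_mod_cast hFE k d (hEmono hk hdn)
  · choose e heE he using fun n => hEnet n x
    refine mem_closure_of_tendsto (tendsto_pi_nhds.2 fun i =>
      tendsto_of_eventually_abs_sub_lt_one_div ?_) (.of_forall fun n =>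
        mem_image_of_mem _ (mem_iUnion.2 ⟨n, heE n⟩))
    filter_upwards [eventually_ge_atTop i] with n hn
    exact he n i hn

end PointwiseCompact

namespace ContinuousLinearMap

variable {X : Type*} [TopologicalSpace X]

noncomputable def variationAux (φ : C(X, ℝ) →L[ℝ] ℝ) (f : C_c(X, ℝ≥0)) : ℝ :=
  sSup (φ '' {h | ∀ x, |h x| ≤ f x})

variable {φ : C(X, ℝ) →L[ℝ] ℝ}

lemma variationAux_set_nonempty (f : C_c(X, ℝ≥0)) :
    (φ '' {h : C(X, ℝ) | ∀ x, |h x| ≤ f x}).Nonempty :=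
  ⟨φ 0, 0, fun x => by simp, rfl⟩

lemma variationAux_le {f : C_c(X, ℝ≥0)} {c : ℝ}
    (hc : ∀ h : C(X, ℝ), (∀ x, |h x| ≤ f x) → φ h ≤ c) : variationAux φ f ≤ c :=
  csSup_le (variationAux_set_nonempty f) (by rintro _ ⟨h, hh, rfl⟩; exact hc h hh)

variable [CompactSpace X]

lemma variationAux_set_bddAbove (f : C_c(X, ℝ≥0)) :
    BddAbove (φ '' {h : C(X, ℝ) | ∀ x, |h x| ≤ f x}) := by
  obtain ⟨C, hC⟩ := (isCompact_range f.continuous).bddAbove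
  refine ⟨‖φ‖ * C, ?_⟩
  rintro _ ⟨h, hh, rfl⟩
  have hh' : ‖h‖ ≤ C := (ContinuousMap.norm_le _ (by positivity)).2 fun x =>
    (hh x).trans (NNReal.coe_le_coe.2 (hC (mem_range_self x)))
  exact (le_abs_self _).trans ((φ.le_opNorm h).trans (by gcongr))

lemma le_variationAux {f : C_c(X, ℝ≥0)} {h : C(X, ℝ)} (hh : ∀ x, |h x| ≤ f x) :
    φ h ≤ variationAux φ f :=
  le_csSup (variationAux_set_bddAbove f) ⟨h, hh, rfl⟩

lemma abs_apply_le_variationAux {f : C_c(X, ℝ≥0)} {h : C(X, ℝ)} (hh : ∀ x, |h x| ≤ f x) :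
    |φ h| ≤ variationAux φ f :=
  abs_le'.2 ⟨le_variationAux hh, by simpa using le_variationAux (h := -h) (by simpa using hh)⟩

lemma variationAux_nonneg (f : C_c(X, ℝ≥0)) : 0 ≤ variationAux φ f :=
  (abs_nonneg _).trans (abs_apply_le_variationAux (h := 0) (by simp))

lemma variationAux_add (f g : C_c(X, ℝ≥0)) :
    variationAux φ (f + g) = variationAux φ f + variationAux φ g := by
  refine le_antisymm (variationAux_le fun h hh => ?_) ?_
  · -- Riesz decomposition: clamp `h` to `[-f, f]`, the remainder is bounded by `g`
    let h₁ : C(X, ℝ) := ⟨fun x => max (min (h x) (f x)) (-f x), by fun_prop⟩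
    have h₁f : ∀ x, |h₁ x| ≤ f x := fun x =>
      abs_le.2 ⟨le_max_right _ _, max_le (min_le_right _ _) (by linarith [(f x).2])⟩
    have h₁g : ∀ x, |(h - h₁) x| ≤ g x := fun x => by
      have := hh x
      simp only [coe_add, Pi.add_apply, NNReal.coe_add] at this
      simp only [ContinuousMap.sub_apply, h₁, ContinuousMap.coe_mk]
      rw [abs_le] at this ⊢
      constructor <;> cases max_cases (min (h x) (f x)) (-f x) <;>
        cases min_cases (h x) (f x) <;> linarith
    calc φ h = φ h₁ + φ (h - h₁) := by rw [map_sub]; ring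
      _ ≤ variationAux φ f + variationAux φ g :=
        add_le_add (le_variationAux h₁f) (le_variationAux h₁g)
  · rw [variationAux, variationAux, ← csSup_add (variationAux_set_nonempty f)
      (variationAux_set_bddAbove f) (variationAux_set_nonempty g) (variationAux_set_bddAbove g)]
    refine csSup_le_csSup (variationAux_set_bddAbove _) ((variationAux_set_nonempty f).add
      (variationAux_set_nonempty g)) ?_
    rintro _ ⟨_, ⟨h₁, hh₁, rfl⟩, _, ⟨h₂, hh₂, rfl⟩, rfl⟩
    refine ⟨h₁ + h₂, fun x => ?_, map_add φ h₁ h₂⟩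
    simpa using (abs_add_le _ _).trans (add_le_add (hh₁ x) (hh₂ x))

lemma mul_variationAux_le (c : ℝ≥0) (f : C_c(X, ℝ≥0)) :
    c * variationAux φ f ≤ variationAux φ (c • f) := by
  rw [variationAux, ← smul_eq_mul, ← Real.sSup_smul_of_nonneg c.coe_nonneg]
  refine csSup_le_csSup (variationAux_set_bddAbove _)
    ((variationAux_set_nonempty f).smul_set) ?_
  rintro _ ⟨_, ⟨h, hh, rfl⟩, rfl⟩
  refine ⟨(c : ℝ) • h, fun x => ?_, map_smul φ _ h⟩
  simpa [abs_mul] using mul_le_mul_of_nonneg_left (hh x) c.2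

lemma variationAux_smul (c : ℝ≥0) (f : C_c(X, ℝ≥0)) :
    variationAux φ (c • f) = c * variationAux φ f := by
  rcases eq_or_ne c 0 with rfl | hc
  · have h0 := variationAux_add (φ := φ) 0 0
    simp only [add_zero, left_eq_add] at h0
    simp [h0]
  · refine le_antisymm ?_ (mul_variationAux_le c f)
    have := mul_variationAux_le (φ := φ) c⁻¹ (c • f)
    rw [smul_smul, inv_mul_cancel₀ hc, one_smul, NNReal.coe_inv] at this
    rwa [inv_mul_le_iff₀ (by positivity)] at this

variable (φ)

noncomputable def variation : C_c(X, ℝ≥0) →ₗ[ℝ≥0] ℝ≥0 where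
  toFun f := ⟨variationAux φ f, variationAux_nonneg f⟩
  map_add' f g := NNReal.eq (variationAux_add f g)
  map_smul' c f := NNReal.eq (variationAux_smul c f)

variable [T2Space X]

theorem abs_apply_le_integral_rieszMeasure_variation [MeasurableSpace X] [BorelSpace X]
    (h : C(X, ℝ)) : |φ h| ≤ ∫ x, |h x| ∂(rieszMeasure (variation φ)) := by
  let habs : C_c(X, ℝ≥0) := continuousMapEquiv ⟨fun x => ‖h x‖₊, by fun_prop⟩
  have habs_apply : ∀ x, (habs x : ℝ) = |h x| := fun x => by simp [habs]
  calc |φ h| ≤ variation φ habs := abs_apply_le_variationAux fun x => (habs_apply x).ge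
    _ = ∫ x, |h x| ∂(rieszMeasure (variation φ)) := by
      simpa only [habs_apply] using (integral_rieszMeasure (variation φ) habs).symm

theorem tendsto_apply_of_tendsto_pointwise {F : ℕ → C(X, ℝ)} {f : C(X, ℝ)} {r : ℝ}
    (hF : ∀ k, ‖F k‖ ≤ r) (hFf : ∀ x, Tendsto (fun k => F k x) atTop (𝓝 (f x))) :
    Tendsto (fun k => φ (F k)) atTop (𝓝 (φ f)) := by
  borelize X
  have hbound : ∀ k x, ‖|F k x - f x|‖ ≤ r + ‖f‖ := fun k x => by
    rw [norm_abs_eq_norm]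
    exact (norm_sub_le _ _).trans
      (add_le_add ((F k).norm_coe_le_norm x |>.trans (hF k)) (f.norm_coe_le_norm x))
  have hlim : Tendsto (fun k => ∫ x, |F k x - f x| ∂(rieszMeasure (variation φ))) atTop
      (𝓝 0) := by
    simpa using tendsto_integral_of_dominated_convergence (fun _ => r + ‖f‖)
      (fun k => (by fun_prop : Continuous fun x => |F k x - f x|).aestronglyMeasurable)
      (integrable_const _) (fun k => ae_of_all _ (hbound k))
      (ae_of_all _ fun x => ((hFf x).sub_const (f x)).abs)
  refine tendsto_iff_norm_sub_tendsto_zero.2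
    (squeeze_zero (fun _ => norm_nonneg _) (fun k => ?_) hlim)
  simpa [← map_sub] using abs_apply_le_integral_rieszMeasure_variation φ (F k - f)

end ContinuousLinearMap

section WeakTopology

variable {X : Type*} [TopologicalSpace X] [CompactSpace X]

theorem tendsto_toWeak_iff {l : Filter C(X, ℝ)} {f : C(X, ℝ)} :
    Tendsto toWeak l (𝓝 (toWeak f)) ↔ ∀ φ : C(X, ℝ) →L[ℝ] ℝ, Tendsto φ l (𝓝 (φ f)) :=
  WeakBilin.tendsto_iff_forall_eval_tendsto _ (separatingDual_iff_injective.mp inferInstance)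

theorem tendsto_toWeak_of_tendsto_coe [T2Space X] {A : Set C(X, ℝ)} {r : ℝ}
    (hr : ∀ f ∈ A, ‖f‖ ≤ r) (hA : IsCompact ((⇑) '' A)) {l : Filter C(X, ℝ)} (hAl : A ∈ l)
    {f : C(X, ℝ)} (hf : Tendsto (⇑) l (𝓝 ⇑f)) : Tendsto toWeak l (𝓝 (toWeak f)) := by
  refine tendsto_toWeak_iff.2 fun φ => Metric.tendsto_nhds.2 fun ε hε => ?_
  by_contra hfar
  set S := {g ∈ A | ε ≤ dist (φ g) (φ f)}
  have hSl : ∃ᶠ g in l, g ∈ S := ((not_eventually.1 hfar).and_eventually hAl).mono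
    fun g ⟨hg, hgA⟩ => ⟨hgA, not_lt.1 hg⟩
  obtain ⟨F, hFS, hF⟩ := exists_seq_tendsto_pointwise_of_mem_closure hA (sep_subset _ _)
    (mem_closure_of_frequently_of_tendsto (hSl.mono fun g hg => mem_image_of_mem _ hg) hf)
  have hφF := φ.tendsto_apply_of_tendsto_pointwise (fun k => hr _ (hFS k).1)
    (tendsto_pi_nhds.1 hF)
  have : ε ≤ 0 := by
    simpa using ge_of_tendsto' (tendsto_iff_dist_tendsto_zero.1 hφF) fun k => (hFS k).2
  linarith

end WeakTopology

/-- If `A ⊆ C(X)` is norm-bounded and compact in the topology of pointwise convergence,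
then `A` is compact in the weak topology of the Banach space `C(X)`. -/
theorem pointwise_compact_implies_weakly_compact
    {X : Type*} [TopologicalSpace X] [CompactSpace X] [T2Space X]
    (A : Set C(X, ℝ))
    (hbdd : ∃ r : ℝ, ∀ f ∈ A, ‖f‖ ≤ r)
    (hcomp : IsCompact ((fun f : C(X, ℝ) => (f : X → ℝ)) '' A)) :
    IsCompact (toWeak '' A) := by
  obtain ⟨r, hr⟩ := hbdd
  refine isCompact_iff_ultrafilter_le_nhds.2 fun 𝔘 h𝔘 => ?_
  let l : Ultrafilter C(X, ℝ) := 𝔘.map (toWeakSpace ℝ C(X, ℝ)).symm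
  have hAl : A ∈ l :=
    mem_of_superset (le_principal_iff.1 h𝔘) (by rintro _ ⟨f, hf, rfl⟩; exact hf)
  obtain ⟨_, ⟨f, hfA, rfl⟩, hf⟩ :=
    hcomp.ultrafilter_le_nhds (l.map (⇑)) (le_principal_iff.2 (Ultrafilter.mem_map.2
      (mem_of_superset hAl (subset_preimage_image _ _))))
  exact ⟨toWeak f, mem_image_of_mem _ hfA, tendsto_toWeak_of_tendsto_coe hr hcomp hAl hf⟩
end

section
/- Let X be a compact Hausdorff space, X₀ a dense subset of X, and A a norm-bounded subset of C(X). Suppose that for every sequence (fₙ) in A and every sequence (xₘ) in X₀, whenever both iterated limits limₙ limₘ fₙ(xₘ) and limₘ limₙ fₙ(xₘ) exist, they are equal. Then the closure of A in ℝ^X (with the product topology) is contained in C(X). -/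
/-!
Suppose `g` lies in the pointwise closure of `A` but is not continuous. Since `X₀` is dense and
`ℝ` is regular, `g` then fails to be continuous at some `p` already along `X₀`: `p` is adherent
to the set `B` of points `z ∈ X₀` with `ε ≤ |g z - g p|`. Every finite family of continuous
functions is nearly constant near `p`, and `g` is approximated on finite sets by members of `A`,
so one can choose alternately `fₙ ∈ A` close to `g` at `p, z₀, …, zₙ₋₁` and `zₙ ∈ B` where
`f₀, …, fₙ₋₁` are close to their values at `p`. Then `limₘ fₙ(zₘ) = fₙ(p) → g(p)`, while
`limₙ fₙ(zₘ) = g(zₘ)` stays `ε` away from `g(p)`; along a subsequence on which `g(zₘ)`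
converges (`g` is bounded by `r`), the two iterated limits differ.
-/

open Filter Topology Metric

theorem exists_strictMono_seq_of_forall_finset_exists {α : Type*} (P : ℕ → α → Prop)
    (r : ℕ → α → α → Prop) (h : ∀ (N : ℕ) (s : Finset α), ∃ y, P N y ∧ ∀ x ∈ s, r N x y) :
    ∃ (k : ℕ → ℕ) (u : ℕ → α), StrictMono k ∧ (∀ n, P (k n) (u n)) ∧
      ∀ m n, m < n → r (k n) (u m) (u n) := by
  classical
  obtain ⟨v, hvP, hvr⟩ := exists_seq_of_forall_finset_exists
    (fun a : ℕ × α => P a.1 a.2) (fun a b => a.1 < b.1 ∧ r b.1 a.2 b.2) fun s _ => by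
      obtain ⟨y, hyP, hyr⟩ := h ((s.image Prod.fst).sup id + 1) (s.image Prod.snd)
      refine ⟨(_, y), hyP, fun a ha => ⟨Nat.lt_succ_of_le ?_, hyr _ (s.mem_image_of_mem _ ha)⟩⟩
      exact Finset.le_sup (f := id) (s.mem_image_of_mem _ ha)
  exact ⟨fun n => (v n).1, fun n => (v n).2, fun m n hmn => (hvr m n hmn).1, hvP,
    fun m n hmn => (hvr m n hmn).2⟩

theorem tendsto_of_eventually_dist_lt {ι Y : Type*} [PseudoMetricSpace Y] {l : Filter ι}
    {u : ι → Y} {c : Y} {δ : ι → ℝ} (hδ : Tendsto δ l (𝓝 0))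
    (h : ∀ᶠ i in l, dist (u i) c < δ i) : Tendsto u l (𝓝 c) :=
  tendsto_iff_dist_tendsto_zero.2 <|
    squeeze_zero' (.of_forall fun _ => dist_nonneg) (h.mono fun _ => le_of_lt) hδ

theorem eventually_forall_finset_dist_lt {ι α Y : Type*} [TopologicalSpace α]
    [PseudoMetricSpace Y] {u : ι → α → Y} (hu : ∀ i, Continuous (u i)) (F : Finset ι) (a : α)
    {δ : ℝ} (hδ : 0 < δ) : ∀ᶠ x in 𝓝 a, ∀ i ∈ F, dist (u i x) (u i a) < δ :=
  (F.eventually_all).2 fun i _ => tendsto_nhds.1 ((hu i).tendsto a) δ hδ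

theorem Dense.continuous_of_forall_tendsto_nhdsWithin {X Y : Type*} [TopologicalSpace X]
    [TopologicalSpace Y] [T3Space Y] {X₀ : Set X} (hX₀ : Dense X₀) {g : X → Y}
    (hg : ∀ x, Tendsto g (𝓝[X₀] x) (𝓝 (g x))) : Continuous g := by
  have hrestrict : ∀ x, Tendsto (g ∘ (↑) : X₀ → Y) (comap (↑) (𝓝 x)) (𝓝 (g x)) := fun x => by
    rw [← tendsto_map'_iff, map_comap, Subtype.range_coe]
    exact hg x
  have hextend : hX₀.extend (g ∘ (↑)) = g :=
    funext fun x => hX₀.extend_eq_of_tendsto (hrestrict x)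
  exact hextend ▸ hX₀.continuous_extend fun x => ⟨g x, hrestrict x⟩

theorem exists_seq_double_limits_of_mem_closure {X Y : Type*} [TopologicalSpace X]
    [PseudoMetricSpace Y] {A : Set C(X, Y)} {g : X → Y} (hg : g ∈ closure ((↑) '' A))
    {B : Set X} {p : X} (hp : p ∈ closure B) :
    ∃ (f : ℕ → C(X, Y)) (z : ℕ → X), (∀ n, f n ∈ A) ∧ (∀ m, z m ∈ B) ∧
      (∀ n, Tendsto (fun m => f n (z m)) atTop (𝓝 (f n p))) ∧
      (∀ m, Tendsto (fun n => f n (z m)) atTop (𝓝 (g (z m)))) ∧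
      Tendsto (fun n => f n p) atTop (𝓝 (g p)) := by
  classical
  have hstep : ∀ (N : ℕ) (s : Finset (C(X, Y) × X)), ∃ y : C(X, Y) × X,
      (y.1 ∈ A ∧ y.2 ∈ B ∧ dist (y.1 p) (g p) < 1 / (N + 1)) ∧
      ∀ x ∈ s, dist (y.1 x.2) (g x.2) < 1 / (N + 1) ∧ dist (x.1 y.2) (x.1 p) < 1 / (N + 1) := by
    intro N s
    have hN : (0 : ℝ) < 1 / (N + 1) := Nat.one_div_pos_of_nat
    obtain ⟨_, hf, f, hfA, rfl⟩ := ((eventually_forall_finset_dist_lt continuous_apply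
      (insert p (s.image Prod.snd)) g hN).and_frequently (mem_closure_iff_frequently.1 hg)).exists
    obtain ⟨z, hz, hzB⟩ := ((eventually_forall_finset_dist_lt (fun f : C(X, Y) => f.continuous)
      (s.image Prod.fst) p hN).and_frequently (mem_closure_iff_frequently.1 hp)).exists
    exact ⟨(f, z), ⟨hfA, hzB, hf p (Finset.mem_insert_self _ _)⟩, fun x hx =>
      ⟨hf _ (Finset.mem_insert_of_mem (s.mem_image_of_mem _ hx)), hz _ (s.mem_image_of_mem _ hx)⟩⟩
  obtain ⟨k, u, hk, hP, hr⟩ := exists_strictMono_seq_of_forall_finset_exists _ _ hstep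
  have htol : Tendsto (fun n => 1 / ((k n : ℝ) + 1)) atTop (𝓝 0) :=
    tendsto_one_div_add_atTop_nhds_zero_nat.comp hk.tendsto_atTop
  refine ⟨fun n => (u n).1, fun n => (u n).2, fun n => (hP n).1, fun n => (hP n).2.1,
    fun n => ?_, fun m => ?_, tendsto_of_eventually_dist_lt htol (.of_forall fun n => (hP n).2.2)⟩
  · exact tendsto_of_eventually_dist_lt htol
      ((eventually_gt_atTop n).mono fun m hm => (hr n m hm).2)
  · exact tendsto_of_eventually_dist_lt htol
      ((eventually_gt_atTop m).mono fun n hn => (hr m n hn).1)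

theorem double_limit_implies_pointwise_closure_continuous_general
    {X : Type*} [TopologicalSpace X] [CompactSpace X]
    (X₀ : Set X) (hX₀ : Dense X₀)
    (A : Set C(X, ℝ))
    (hbdd : ∃ r : ℝ, ∀ f ∈ A, ‖f‖ ≤ r)
    (hdl : ∀ (f : ℕ → C(X, ℝ)), (∀ n, f n ∈ A) →
      ∀ (x : ℕ → X), (∀ m, x m ∈ X₀) →
      ∀ (a b : ℕ → ℝ) (L₁ L₂ : ℝ),
        (∀ n, Tendsto (fun m => f n (x m)) atTop (𝓝 (a n))) →
        (∀ m, Tendsto (fun n => f n (x m)) atTop (𝓝 (b m))) →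
        Tendsto a atTop (𝓝 L₁) → Tendsto b atTop (𝓝 L₂) → L₁ = L₂) :
    ∀ g ∈ closure ((fun f : C(X, ℝ) => (f : X → ℝ)) '' A), Continuous g := by
  obtain ⟨r, hr⟩ := hbdd
  intro g hg
  by_contra hgc
  obtain ⟨p, hp⟩ : ∃ p, ¬Tendsto g (𝓝[X₀] p) (𝓝 (g p)) := by
    by_contra! h
    exact hgc (hX₀.continuous_of_forall_tendsto_nhdsWithin h)
  obtain ⟨ε, hε, hfar⟩ : ∃ ε > 0, ∃ᶠ z in 𝓝[X₀] p, ε ≤ dist (g z) (g p) := by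
    simpa [Metric.tendsto_nhds] using hp
  obtain ⟨f, z, hfA, hzB, hrow, hcol, hdiag⟩ := exists_seq_double_limits_of_mem_closure hg
    (B := {z | ε ≤ dist (g z) (g p) ∧ z ∈ X₀})
    (mem_closure_iff_frequently.2 (frequently_nhdsWithin_iff.1 hfar))
  have hgr : g ∈ Set.univ.pi fun _ => closedBall (0 : ℝ) r := by
    refine (isClosed_set_pi fun _ _ => isClosed_closedBall).closure_subset_iff.2 ?_ hg
    rintro _ ⟨f, hf, rfl⟩ x -
    exact mem_closedBall_zero_iff.2 ((f.norm_coe_le_norm x).trans (hr f hf))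
  obtain ⟨L, -, φ, hφ, hL⟩ :=
    (isCompact_closedBall (0 : ℝ) r).tendsto_subseq fun m => hgr (z m) trivial
  have hpL : g p = L := hdl f hfA (z ∘ φ) (fun i => (hzB (φ i)).2) _ _ _ _
    (fun n => (hrow n).comp hφ.tendsto_atTop) (fun i => hcol (φ i)) hdiag hL
  have hεL : ε ≤ dist L (g p) :=
    ge_of_tendsto' (hL.dist tendsto_const_nhds) fun i => (hzB (φ i)).1
  rw [hpL, dist_self] at hεL
  exact hε.not_ge hεL

/-- Grothendieck's criterion, key step: if `A ⊆ C(X)` is norm-bounded and satisfies the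
double limit condition with respect to a dense subset `X₀`, then every function in the
closure of `A` in `ℝ^X` (product topology) is continuous. -/
theorem double_limit_implies_pointwise_closure_continuous
    {X : Type*} [TopologicalSpace X] [CompactSpace X] [T2Space X]
    (X₀ : Set X) (hX₀ : Dense X₀)
    (A : Set C(X, ℝ))
    (hbdd : ∃ r : ℝ, ∀ f ∈ A, ‖f‖ ≤ r)
    (hdl : ∀ (f : ℕ → C(X, ℝ)), (∀ n, f n ∈ A) →
      ∀ (x : ℕ → X), (∀ m, x m ∈ X₀) →
      ∀ (a b : ℕ → ℝ) (L₁ L₂ : ℝ),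
        (∀ n, Tendsto (fun m => f n (x m)) atTop (𝓝 (a n))) →
        (∀ m, Tendsto (fun n => f n (x m)) atTop (𝓝 (b m))) →
        Tendsto a atTop (𝓝 L₁) → Tendsto b atTop (𝓝 L₂) → L₁ = L₂) :
    ∀ g ∈ closure ((fun f : C(X, ℝ) => (f : X → ℝ)) '' A), Continuous g :=
  double_limit_implies_pointwise_closure_continuous_general X₀ hX₀ A hbdd hdl
end

section
/- Let X be a compact Hausdorff space and A a relatively weakly compact subset of C(X). Then for all sequences (fₙ) in A and (xₘ) in X, the iterated limits limₙ limₘ fₙ(xₘ) and limₘ limₙ fₙ(xₘ) are equal whenever both exist. -/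
open Filter Topology

/-- A cluster point of a sequence converging to `L` in a T2 space equals `L`. -/
theorem mapClusterPt_eq_of_tendsto {Y : Type*} [TopologicalSpace Y] [T2Space Y]
    {u : ℕ → Y} {c L : Y} (hc : MapClusterPt c atTop u)
    (hL : Tendsto u atTop (𝓝 L)) : c = L := by
  have : ClusterPt c (𝓝 L) := hc.clusterPt.mono hL
  exact eq_of_nhds_neBot this.neBot

/-- Easy direction of Grothendieck's double limit criterion: if `A ⊆ C(X)` is relatively
weakly compact, then the two iterated limits agree whenever both exist. -/
theorem relatively_weakly_compact_implies_double_limit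
    {X : Type*} [TopologicalSpace X] [CompactSpace X] [T2Space X]
    (A : Set C(X, ℝ))
    (hwc : IsCompact (closure (toWeak '' A))) :
    ∀ (f : ℕ → C(X, ℝ)), (∀ n, f n ∈ A) →
      ∀ (x : ℕ → X) (a b : ℕ → ℝ) (L₁ L₂ : ℝ),
        (∀ n, Tendsto (fun m => f n (x m)) atTop (𝓝 (a n))) →
        (∀ m, Tendsto (fun n => f n (x m)) atTop (𝓝 (b m))) →
        Tendsto a atTop (𝓝 L₁) → Tendsto b atTop (𝓝 L₂) → L₁ = L₂ := by
  intro f hfA x a b L₁ L₂ ha hb hL₁ hL₂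
  -- get a weak cluster point g of the sequence f
  obtain ⟨g, -, hg⟩ := hwc.exists_clusterPt (f := map (fun n => toWeak (f n)) atTop)
    (le_principal_iff.2 (mem_map.2 (Eventually.of_forall fun n =>
      subset_closure (Set.mem_image_of_mem _ (hfA n)))))
  have hg : MapClusterPt g atTop (fun n => toWeak (f n)) := hg
  -- get a cluster point x₀ of the sequence x
  obtain ⟨x₀, -, hx₀⟩ := (isCompact_univ (X := X)).exists_clusterPt
    (f := map x atTop) (le_principal_iff.2 (mem_map.2 (Eventually.of_forall fun _ =>
      Set.mem_univ _)))
  have hx₀ : MapClusterPt x₀ atTop x := hx₀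
  -- evaluation at a point is weakly continuous
  have heval : ∀ y : X, Continuous fun h : WeakSpace ℝ C(X, ℝ) =>
      ContinuousMap.evalCLM ℝ y h := fun y =>
    WeakBilin.eval_continuous (topDualPairing ℝ C(X, ℝ)).flip (ContinuousMap.evalCLM ℝ y)
  set G : C(X, ℝ) := g with hG
  -- for each y, f n y clusters at G y
  have hclust : ∀ y : X, MapClusterPt (G y) atTop (fun n => f n y) := fun y =>
    (hg.continuousAt_comp (heval y).continuousAt)
  -- b m = G (x m)
  have hbm : ∀ m, G (x m) = b m := fun m =>
    mapClusterPt_eq_of_tendsto (hclust (x m)) (hb m)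
  -- L₂ = G x₀ : since G continuous, G (x m) clusters at G x₀, and G (x m) = b m → L₂
  have hGx₀ : G x₀ = L₂ := by
    have h1 : MapClusterPt (G x₀) atTop (fun m => G (x m)) :=
      hx₀.continuousAt_comp G.continuous.continuousAt
    have h2 : Tendsto (fun m => G (x m)) atTop (𝓝 L₂) := by
      simpa only [funext hbm] using hL₂
    exact mapClusterPt_eq_of_tendsto h1 h2
  -- a n = f n x₀
  have han : ∀ n, f n x₀ = a n := fun n =>
    mapClusterPt_eq_of_tendsto (hx₀.continuousAt_comp (f n).continuous.continuousAt) (ha n)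
  -- L₁ = G x₀ : f n x₀ = a n → L₁ and f n x₀ clusters at G x₀
  have hGx₀' : G x₀ = L₁ := by
    have h2 : Tendsto (fun n => f n x₀) atTop (𝓝 L₁) := by
      simpa only [funext han] using hL₁
    exact mapClusterPt_eq_of_tendsto (hclust x₀) h2
  rw [← hGx₀, ← hGx₀']
end

section
/- Let X be a topological space, Y a dense subset of X, and (fₙ) a uniformly bounded sequence of continuous real-valued functions on X. Then (fₙ) is an independent sequence on X if and only if the sequence of restrictions (fₙ|_Y) is an independent sequence on Y. -/
open Filter Topology

/-- A sequence of real-valued functions on `X` is independent on a subset `S ⊆ X` if there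
are `s < r` such that every finite pattern is realized by a point of `S`. -/
def IndepOn {X : Type*} (f : ℕ → X → ℝ) (S : Set X) : Prop :=
  ∃ s r : ℝ, s < r ∧ ∀ k : ℕ, ∀ I ⊆ Finset.range k, ∃ z ∈ S,
    ∀ i ∈ Finset.range k, (i ∈ I → f i z ≤ s) ∧ (i ∉ I → r ≤ f i z)

/-- A uniformly bounded sequence of continuous functions is independent on `X` iff the
sequence of restrictions to a dense subset `Y` is independent on `Y`. -/
theorem indep_iff_indep_on_dense
    {X : Type*} [TopologicalSpace X] (Y : Set X) (hY : Dense Y)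
    (f : ℕ → X → ℝ) (hf : ∀ n, Continuous (f n))
    (hbdd : ∃ r : ℝ, ∀ n x, |f n x| ≤ r) :
    IndepOn f Set.univ ↔ IndepOn f Y := by
  constructor
  · rintro ⟨s, r, hsr, h⟩
    refine ⟨(2*s+r)/3, (s+2*r)/3, by linarith, fun k I hI => ?_⟩
    obtain ⟨z, -, hz⟩ := h k I hI
    set U : Set X := {x | ∀ i ∈ Finset.range k, (i ∈ I → f i x < (2*s+r)/3) ∧
        (i ∉ I → (s+2*r)/3 < f i x)} with hUdef
    have hUopen : IsOpen U := by
      have : U = ⋂ i ∈ Finset.range k,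
          {x | (i ∈ I → f i x < (2*s+r)/3) ∧ (i ∉ I → (s+2*r)/3 < f i x)} := by
        ext x; simp [hUdef, Set.mem_iInter]
      rw [this]
      apply isOpen_biInter_finset
      intro i _
      by_cases hi : i ∈ I
      · have : {x | (i ∈ I → f i x < (2*s+r)/3) ∧ (i ∉ I → (s+2*r)/3 < f i x)} =
            {x | f i x < (2*s+r)/3} := by ext x; simp [hi]
        rw [this]; exact isOpen_lt (hf i) continuous_const
      · have : {x | (i ∈ I → f i x < (2*s+r)/3) ∧ (i ∉ I → (s+2*r)/3 < f i x)} =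
            {x | (s+2*r)/3 < f i x} := by ext x; simp [hi]
        rw [this]; exact isOpen_lt continuous_const (hf i)
    have hzU : z ∈ U := by
      intro i hi
      obtain ⟨h1, h2⟩ := hz i hi
      exact ⟨fun hiI => by linarith [h1 hiI], fun hiI => by linarith [h2 hiI]⟩
    obtain ⟨y, hyY, hyU⟩ := hY.exists_mem_open hUopen ⟨z, hzU⟩
    refine ⟨y, hyY, fun i hi => ?_⟩
    obtain ⟨h1, h2⟩ := hyU i hi
    exact ⟨fun hiI => (h1 hiI).le, fun hiI => (h2 hiI).le⟩
  · rintro ⟨s, r, hsr, h⟩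
    refine ⟨s, r, hsr, fun k I hI => ?_⟩
    obtain ⟨z, _, hz⟩ := h k I hI
    exact ⟨z, Set.mem_univ z, hz⟩
end

section
/- Let X be a compact Hausdorff space and F ⊆ C(X) a norm-bounded set that is relatively weakly compact in C(X). Then F has the sequential closure property: for every sequence (fₙ) in F converging pointwise to a function f, and for every sequence (aₘ) in X such that limₘ f(aₘ) exists, one has limₘ f(aₘ) = f(a) for every cluster point a of (aₘ). -/
open Filter Topology

theorem MapClusterPt.eq_of_tendsto {X ι : Type*} [TopologicalSpace X] [T2Space X]
    {l : Filter ι} {u : ι → X} {x y : X} (hx : MapClusterPt x l u) (hy : Tendsto u l (𝓝 y)) :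
    x = y :=
  eq_of_nhds_neBot (hx.clusterPt.neBot.mono (inf_le_inf_left _ hy))

namespace ContinuousMap

variable {X ι : Type*} [TopologicalSpace X]

theorem continuous_weakSpace_eval (x : X) :
    Continuous fun w : WeakSpace ℝ C(X, ℝ) => evalCLM ℝ x w :=
  WeakBilin.eval_continuous _ (evalCLM ℝ x)

variable [CompactSpace X] {l : Filter ι}

theorem coe_eq_of_weak_mapClusterPt {f : ι → C(X, ℝ)} {g : X → ℝ} {h : C(X, ℝ)}
    (hh : MapClusterPt (toWeak h) l (toWeak ∘ f))
    (hg : ∀ x, Tendsto (fun n => f n x) l (𝓝 (g x))) : ⇑h = g :=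
  funext fun x =>
    (hh.continuousAt_comp (continuous_weakSpace_eval x).continuousAt).eq_of_tendsto (hg x)

theorem continuous_of_tendsto_of_isCompact_weak_closure [NeBot l] {F : Set C(X, ℝ)}
    (hwc : IsCompact (closure (toWeak '' F))) {f : ι → C(X, ℝ)} (hf : ∀ n, f n ∈ F)
    {g : X → ℝ} (hg : ∀ x, Tendsto (fun n => f n x) l (𝓝 (g x))) : Continuous g := by
  obtain ⟨h, -, hh⟩ := hwc.exists_mapClusterPt (f := l) (u := toWeak ∘ f)
    (tendsto_principal.2 <| .of_forall fun n => subset_closure ⟨f n, hf n, rfl⟩)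
  rw [← coe_eq_of_weak_mapClusterPt hh hg]
  exact h.continuous

end ContinuousMap

theorem relatively_weakly_compact_implies_scp_general
    {X : Type*} [TopologicalSpace X] [CompactSpace X]
    (F : Set C(X, ℝ))
    (hwc : IsCompact (closure (toWeak '' F))) :
    ∀ (f : ℕ → C(X, ℝ)), (∀ n, f n ∈ F) →
      ∀ (g : X → ℝ), (∀ x, Tendsto (fun n => f n x) atTop (𝓝 (g x))) →
      ∀ (a : ℕ → X) (L : ℝ), Tendsto (fun m => g (a m)) atTop (𝓝 L) →
      ∀ b : X, MapClusterPt b atTop a → L = g b := by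
  intro f hf g hg a L ha b hb
  have hgc : Continuous g :=
    ContinuousMap.continuous_of_tendsto_of_isCompact_weak_closure hwc hf hg
  exact ((hb.continuousAt_comp hgc.continuousAt).eq_of_tendsto ha).symm

/-- A relatively weakly compact norm-bounded set `F ⊆ C(X)` has the sequential closure
property: for every pointwise convergent sequence from `F` with limit `f` and every
sequence `(aₘ)` in `X` such that `limₘ f (aₘ)` exists, that limit equals `f a` for every
cluster point `a` of `(aₘ)`. -/
theorem relatively_weakly_compact_implies_scp
    {X : Type*} [TopologicalSpace X] [CompactSpace X] [T2Space X]
    (F : Set C(X, ℝ))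
    (hbdd : ∃ r : ℝ, ∀ f ∈ F, ‖f‖ ≤ r)
    (hwc : IsCompact (closure (toWeak '' F))) :
    ∀ (f : ℕ → C(X, ℝ)), (∀ n, f n ∈ F) →
      ∀ (g : X → ℝ), (∀ x, Tendsto (fun n => f n x) atTop (𝓝 (g x))) →
      ∀ (a : ℕ → X) (L : ℝ), Tendsto (fun m => g (a m)) atTop (𝓝 L) →
      ∀ b : X, MapClusterPt b atTop a → L = g b :=
  relatively_weakly_compact_implies_scp_general F hwc
end

section
/- Let X be a compact Hausdorff space and (fₙ) an increasing sequence of continuous real-valued functions on X converging pointwise to a function ψ. If there exist ε > 0 and a sequence (bⱼ) in X with a cluster point b such that fᵢ(bⱼ) + ε < limₖ fₖ(bᵢ) for all i < j, then ψ is not continuous. -/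
open Filter Topology

/-- If an increasing sequence of continuous functions on a compact Hausdorff space
converges pointwise to `ψ`, and there are `ε > 0` and a sequence `(bⱼ)` with a cluster
point such that `fᵢ(bⱼ) + ε < ψ(bᵢ)` for all `i < j`, then `ψ` is not continuous. -/
theorem sop_limit_not_continuous
    {X : Type*} [TopologicalSpace X] [CompactSpace X] [T2Space X]
    (f : ℕ → C(X, ℝ)) (hmono : ∀ n x, f n x ≤ f (n + 1) x)
    (ψ : X → ℝ) (hlim : ∀ x, Tendsto (fun n => f n x) atTop (𝓝 (ψ x)))
    (ε : ℝ) (hε : 0 < ε) (b : ℕ → X) (b₀ : X) (hb₀ : MapClusterPt b₀ atTop b)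
    (hsop : ∀ i j, i < j → f i (b j) + ε < ψ (b i)) :
    ¬ Continuous ψ := by
  intro hψ
  -- Step 1: for each i, f i b₀ + ε ≤ ψ (b i)
  have key : ∀ i, f i b₀ + ε ≤ ψ (b i) := by
    intro i
    by_contra h
    push_neg at h
    have hcl : MapClusterPt (f i b₀) atTop (fun j => f i (b j)) :=
      hb₀.continuousAt_comp (f i).continuous.continuousAt
    have hmem : (f i b₀ : ℝ) ∈ {y : ℝ | ψ (b i) - ε < y} := by
      simp only [Set.mem_setOf_eq]; linarith
    have hfreq : ∃ᶠ j in atTop, ψ (b i) - ε < f i (b j) :=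
      (mapClusterPt_iff_frequently.1 hcl) {y | ψ (b i) - ε < y}
        ((isOpen_lt continuous_const continuous_id).mem_nhds hmem)
    have hev : ∀ᶠ j in atTop, f i (b j) ≤ ψ (b i) - ε := by
      filter_upwards [eventually_gt_atTop i] with j hj
      linarith [hsop i j hj]
    rcases (hfreq.and_eventually hev).exists with ⟨j, h1, h2⟩
    linarith
  -- Step 2: ψ (b₀) clusters along ψ ∘ b
  have hcl2 : MapClusterPt (ψ b₀) atTop (ψ ∘ b) :=
    hb₀.continuousAt_comp hψ.continuousAt
  have hmem2 : (ψ b₀ : ℝ) ∈ {y : ℝ | y < ψ b₀ + ε / 2} := by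
    simp only [Set.mem_setOf_eq]; linarith
  have hfreq2 : ∃ᶠ i in atTop, (ψ ∘ b) i < ψ b₀ + ε / 2 :=
    (mapClusterPt_iff_frequently.1 hcl2) {y | y < ψ b₀ + ε / 2}
      ((isOpen_lt continuous_id continuous_const).mem_nhds hmem2)
  -- Step 3: eventually f i b₀ is close to ψ b₀
  have hev2 : ∀ᶠ i in atTop, ψ b₀ - ε / 2 < f i b₀ := by
    have := (hlim b₀).eventually (eventually_gt_nhds (by linarith : ψ b₀ - ε / 2 < ψ b₀))
    exact this
  rcases (hfreq2.and_eventually hev2).exists with ⟨i, h1, h2⟩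
  have := key i
  simp only [Function.comp] at h1
  linarith
end
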